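/- arXiv:2507.18230 — 3 statements merged into one kernel-verified Lean document; each statement's English description precedes it below -/
import Mathlib

section
/- Let R be an echelon-independent connected finite poset with at least 2 elements. Then echelonmotion on R has no fixed points: for every linear extension σ and every x ∈ R, Ech_σ(x) ≠ x. -/
open scoped Classical
open Finset

noncomputable section

/-- A linear extension of a finite poset, viewed as an order-preserving
bijection onto `Fin n`. -/
def IsLinExt {α : Type*} [PartialOrder α] {n : ℕ} (σ : α ≃ Fin n) : Prop :=
  ∀ a b : α, a ≤ b → σ a ≤ σ b

/-- The Cartan matrix of a finite poset with respect to a linear extension. -/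
def cartan {α : Type*} [PartialOrder α] {n : ℕ} (σ : α ≃ Fin n) :
    Matrix (Fin n) (Fin n) ℂ :=
  fun i j => if σ.symm j ≤ σ.symm i then 1 else 0

/-- Upper-triangular matrices. -/
def IsUpperTri {n : ℕ} (U : Matrix (Fin n) (Fin n) ℂ) : Prop :=
  ∀ i j : Fin n, j < i → U i j = 0

/-- The permutation matrix of `π`, with a `1` in row `i` and column `π i`. -/
def permMat {n : ℕ} (π : Equiv.Perm (Fin n)) : Matrix (Fin n) (Fin n) ℂ :=
  fun i j => if π i = j then 1 else 0

/-- `π` is the (unique) permutation indexing the Bruhat cell of `W`,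
i.e. `W ∈ B (permMat π) B` with `B` the invertible upper-triangular matrices. -/
def IsBruhatPerm {n : ℕ} (W : Matrix (Fin n) (Fin n) ℂ) (π : Equiv.Perm (Fin n)) : Prop :=
  ∃ U₁ U₂ : Matrix (Fin n) (Fin n) ℂ,
    IsUpperTri U₁ ∧ IsUpperTri U₂ ∧ IsUnit U₁.det ∧ IsUnit U₂.det ∧
      W = U₁ * permMat π * U₂

/-- Echelonmotion with respect to `σ`, given the Bruhat permutation `π` of the
Cartan matrix: `ech σ π x = y` iff `permMat π` has a `1` in row `σ y`, column `σ x`. -/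
def ech {α : Type*} [PartialOrder α] {n : ℕ} (σ : α ≃ Fin n) (π : Equiv.Perm (Fin n)) :
    α → α := fun x => σ.symm (π⁻¹ (σ x))

end

/-- A finite poset is connected if any two elements are joined by a path in the
Hasse diagram (a zigzag of covering relations). -/
def PosetConnected (α : Type*) [PartialOrder α] : Prop :=
  ∀ a b : α, Relation.ReflTransGen (fun x y : α => x ⋖ y ∨ y ⋖ x) a b

/-- A finite poset is echelon-independent if echelonmotion is the same map for
all linear extensions. -/
def EchIndep (α : Type*) [PartialOrder α] [Fintype α] : Prop :=
  ∀ (σ σ' : α ≃ Fin (Fintype.card α)) (π π' : Equiv.Perm (Fin (Fintype.card α))),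
    IsLinExt σ → IsLinExt σ' →
      IsBruhatPerm (cartan σ) π → IsBruhatPerm (cartan σ') π' →
        ech σ π = ech σ' π'

/-!
If `W = U₁ * permMat π * U₂` with `U₁`, `U₂` invertible upper triangular, then for an up-closed
set of rows `p` and a down-closed set of columns `q` the block `W.toBlock p q` has the rank of the
corresponding block of `permMat π`, namely `#{i | p i ∧ q (π i)}`. So if `π m = m`, the block with
rows `≥ m` and columns `≤ m` has rank one more than the block obtained by dropping row `m`, and one
more than the block obtained by dropping column `m`.

Let `x` be a fixed point of echelonmotion. By echelon-independence, `σ x` is a fixed point of the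
Bruhat permutation of `cartan σ` for every linear extension `σ`. Choose `σ` so that the elements
above `x` occupy the positions `≥ σ x`: an element `v < x` would make column `σ x` of that block a
copy of column `σ v`, so dropping it would not lower the rank. Dually, choosing `σ` so that the
elements below `x` occupy the positions `≤ σ x`, an element `u > x` would make row `σ x` a copy of
row `σ u`. Hence `x` is both minimal and maximal, which a connected poset with at least two
elements does not allow.
-/
section UpperTriangular

variable {n : ℕ} {U : Matrix (Fin n) (Fin n) ℂ}

lemma isUpperTri_iff : IsUpperTri U ↔ U.IsUpperTriangular :=
  ⟨fun h _ _ hij => h _ _ hij, fun h _ _ hij => h hij⟩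

lemma IsUpperTri.det_eq_prod_diag (hU : IsUpperTri U) : U.det = ∏ i, U i i :=
  Matrix.det_of_isUpperTriangular (isUpperTri_iff.mp hU)

lemma IsUpperTri.inv (hU : IsUpperTri U) (hd : IsUnit U.det) : IsUpperTri U⁻¹ := by
  have := U.invertibleOfIsUnitDet hd
  exact isUpperTri_iff.mpr (Matrix.blockTriangular_inv_of_blockTriangular (isUpperTri_iff.mp hU))

lemma IsUpperTri.isUnit_det_toBlock (hU : IsUpperTri U) (hd : IsUnit U.det) (p : Fin n → Prop)
    [Fintype {i // p i}] : IsUnit (U.toBlock p p).det := by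
  rw [Matrix.det_of_isUpperTriangular (M := U.toBlock p p) fun i j hij => hU i j hij,
    isUnit_iff_ne_zero, Finset.prod_ne_zero_iff]
  rw [hU.det_eq_prod_diag, isUnit_iff_ne_zero, Finset.prod_ne_zero_iff] at hd
  exact fun i _ => hd i (Finset.mem_univ _)

lemma IsUpperTri.toBlock_eq_zero (hU : IsUpperTri U) {p q : Fin n → Prop}
    (h : ∀ i j, p i → q j → j < i) : U.toBlock p q = 0 := by
  ext i j
  exact hU _ _ (h _ _ i.2 j.2)

end UpperTriangular

lemma permMat_mul_apply {n : ℕ} (π : Equiv.Perm (Fin n)) (B : Matrix (Fin n) (Fin n) ℂ) (i j) :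
    (permMat π * B) i j = B (π i) j := by
  simp [Matrix.mul_apply, permMat]

section LeadingIndex

open Matrix

variable {ι K : Type*} [LinearOrder ι]

def IsLeadingIndex [Zero K] (v : ι → K) (c : ι) : Prop :=
  v c ≠ 0 ∧ ∀ j < c, v j = 0

lemma exists_isLeadingIndex [Zero K] [Fintype ι] {v : ι → K} (hv : v ≠ 0) :
    ∃ c, IsLeadingIndex v c := by
  have hsupp : (Finset.univ.filter fun j => v j ≠ 0).Nonempty := by
    obtain ⟨j, hj⟩ := Function.ne_iff.mp hv
    exact ⟨j, by simpa using hj⟩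
  refine ⟨_, (Finset.mem_filter.mp (Finset.min'_mem _ hsupp)).2, fun j hj => ?_⟩
  by_contra h
  exact (Finset.min'_le _ j (by simpa using h)).not_gt hj

def unitriangularRow [Zero K] [One K] (i : ι) : Set (ι → K) :=
  {u | u i = 1 ∧ ∀ k < i, u k = 0}

variable [Fintype ι] [Field K] {W : Matrix ι ι K}

lemma vecMul_ne_zero_of_mem_unitriangularRow (hW : IsUnit W.det) {i : ι} {u : ι → K}
    (hu : u ∈ unitriangularRow i) : u ᵥ* W ≠ 0 := by
  intro h
  have : u = 0 := Matrix.vecMul_injective_of_isUnit ((Matrix.isUnit_iff_isUnit_det W).mpr hW)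
    (h.trans (zero_vecMul W).symm)
  simpa [this] using hu.1

lemma exists_unitriangularRow_max_leadingIndex (hW : IsUnit W.det) (i : ι) :
    ∃ u ∈ unitriangularRow i, ∃ c, IsLeadingIndex (u ᵥ* W) c ∧
      ∀ u' ∈ unitriangularRow i, ∀ c', IsLeadingIndex (u' ᵥ* W) c' → c' ≤ c := by
  let L : Finset ι :=
    Finset.univ.filter fun c => ∃ u ∈ unitriangularRow i, IsLeadingIndex (u ᵥ* W) c
  have hL : L.Nonempty := by
    have hu : Pi.single i 1 ∈ unitriangularRow (K := K) i :=
      ⟨by simp, fun k hk => by simp [hk.ne]⟩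
    obtain ⟨c, hc⟩ := exists_isLeadingIndex (vecMul_ne_zero_of_mem_unitriangularRow hW hu)
    exact ⟨c, Finset.mem_filter.mpr ⟨Finset.mem_univ _, _, hu, hc⟩⟩
  obtain ⟨u, hu, hc⟩ := (Finset.mem_filter.mp (L.max'_mem hL)).2
  exact ⟨u, hu, _, hc, fun u' hu' c' hc' =>
    L.le_max' c' (Finset.mem_filter.mpr ⟨Finset.mem_univ _, u', hu', hc'⟩)⟩

/-- Subtracting a multiple of the lower row kills the common leading entry. -/
lemma exists_unitriangularRow_leadingIndex_gt (hW : IsUnit W.det) {i i' c : ι} {u u' : ι → K}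
    (hu : u ∈ unitriangularRow i) (hu' : u' ∈ unitriangularRow i') (hii' : i < i')
    (hc : IsLeadingIndex (u ᵥ* W) c) (hc' : IsLeadingIndex (u' ᵥ* W) c) :
    ∃ v ∈ unitriangularRow i, ∃ c'', c < c'' ∧ IsLeadingIndex (v ᵥ* W) c'' := by
  set a := (u ᵥ* W) c / (u' ᵥ* W) c
  have hv : u - a • u' ∈ unitriangularRow i :=
    ⟨by simp [hu.1, hu'.2 i hii'], fun k hk => by simp [hu.2 k hk, hu'.2 k (hk.trans hii')]⟩
  obtain ⟨c'', hc''⟩ := exists_isLeadingIndex (vecMul_ne_zero_of_mem_unitriangularRow hW hv)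
  refine ⟨_, hv, c'', lt_of_not_ge fun hle => hc''.1 ?_, hc''⟩
  rw [Matrix.sub_vecMul, Matrix.smul_vecMul]
  rcases hle.lt_or_eq with hlt | rfl
  · simp [hc.2 c'' hlt, hc'.2 c'' hlt]
  · simp [a, div_mul_cancel₀ _ hc'.1]

end LeadingIndex

open Matrix in
theorem exists_isBruhatPerm {n : ℕ} {W : Matrix (Fin n) (Fin n) ℂ} (hW : IsUnit W.det) :
    ∃ π, IsBruhatPerm W π := by
  -- Row `i` of `U` pushes the leading index `c i` of row `i` of `U * W` as far right as possible.
  -- The `c i` are then pairwise distinct and define `π`, and `U * W = permMat π * V` with `V`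
  -- upper triangular.
  choose u hu c hc hmax using exists_unitriangularRow_max_leadingIndex hW
  have hinj : Function.Injective c := by
    intro i i' h
    by_contra hne
    wlog hlt : i < i' generalizing i i'
    · exact this h.symm (Ne.symm hne) ((not_lt.mp hlt).lt_of_ne (Ne.symm hne))
    obtain ⟨v, hv, c'', hlt'', hc''⟩ :=
      exists_unitriangularRow_leadingIndex_gt hW (hu i) (hu i') hlt (hc i) (h ▸ hc i')
    exact (hmax i v hv c'' hc'').not_gt hlt''
  set π := Equiv.ofBijective c hinj.bijective_of_finite
  have hπ : ∀ j, c (π.symm j) = j := Equiv.ofBijective_apply_symm_apply c _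
  set U : Matrix (Fin n) (Fin n) ℂ := of u
  set V : Matrix (Fin n) (Fin n) ℂ := of fun j => u (π.symm j) ᵥ* W
  have hU : IsUpperTri U := fun i j hij => (hu i).2 j hij
  have hUdet : IsUnit U.det := by simp [hU.det_eq_prod_diag, U, (hu _).1]
  have hV : IsUpperTri V := fun j l hlj => (hc (π.symm j)).2 l (by rwa [hπ])
  have hVdet : IsUnit V.det := by
    rw [hV.det_eq_prod_diag, isUnit_iff_ne_zero, Finset.prod_ne_zero_iff]
    intro j _
    simpa [V, hπ] using (hc (π.symm j)).1
  have hUW : U * W = permMat π * V := by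
    ext i l
    rw [permMat_mul_apply]
    simp [U, V, mul_apply, vecMul, dotProduct]
  refine ⟨π, U⁻¹, V, hU.inv hUdet, hV, isUnit_nonsing_inv_det U hUdet, hVdet, ?_⟩
  rw [Matrix.mul_assoc, ← hUW, ← Matrix.mul_assoc, nonsing_inv_mul U hUdet, Matrix.one_mul]

namespace Matrix

variable {m n R : Type*}

lemma rank_toBlock_eq_of_col_eq [CommRing R] {M : Matrix m n R} {p : m → Prop} {q q' : n → Prop}
    [Fintype {j // q j}] [Fintype {j // q' j}] {j₀ j₁ : n} (hq : ∀ j, q j ↔ q' j ∨ j = j₀)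
    (hj₁ : q' j₁) (h : ∀ i, p i → M i j₀ = M i j₁) :
    (M.toBlock p q).rank = (M.toBlock p q').rank := by
  have hcols : Set.range (M.toBlock p q).col = Set.range (M.toBlock p q').col := by
    ext v
    constructor
    · rintro ⟨⟨j, hj⟩, rfl⟩
      rcases (hq j).mp hj with hj | rfl
      · exact ⟨⟨j, hj⟩, rfl⟩
      · exact ⟨⟨j₁, hj₁⟩, funext fun i => (h i i.2).symm⟩
    · rintro ⟨⟨j, hj⟩, rfl⟩
      exact ⟨⟨j, (hq j).mpr (Or.inl hj)⟩, rfl⟩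
  rw [rank_eq_finrank_span_cols, rank_eq_finrank_span_cols, hcols]

lemma rank_toBlock_eq_of_row_eq [Field R] {M : Matrix m n R} {p p' : m → Prop} {q : n → Prop}
    [Fintype {i // p i}] [Fintype {i // p' i}] [Fintype {j // q j}] {i₀ i₁ : m}
    (hp : ∀ i, p i ↔ p' i ∨ i = i₀) (hi₁ : p' i₁) (h : ∀ j, q j → M i₀ j = M i₁ j) :
    (M.toBlock p q).rank = (M.toBlock p' q).rank := by
  rw [← rank_transpose, ← rank_transpose (M.toBlock p' q)]
  exact rank_toBlock_eq_of_col_eq (M := Mᵀ) hp hi₁ h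

end Matrix

open Matrix in
lemma rank_toBlock_permMat {n : ℕ} (π : Equiv.Perm (Fin n)) (p q : Fin n → Prop)
    [Fintype {i // q i}] : ((permMat π).toBlock p q).rank = {i | p i ∧ q (π i)}.ncard := by
  set M := (permMat π).toBlock p q
  set d : {i // p i} → ℂ := fun k => if q (π k) then 1 else 0
  -- `M * Mᵀ = diagonal d` and `diagonal d * M = M`, so `M` has the rank of `diagonal d`.
  have hMMt : M * Mᵀ = diagonal d := by
    ext k k'
    simp only [mul_apply, transpose_apply, M, toBlock_apply, permMat, diagonal_apply, d]
    by_cases hk : q (π k)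
    · rw [Fintype.sum_eq_single ⟨π k, hk⟩ fun l hl => by simp [Ne.symm (Subtype.coe_ne_coe.mpr hl)]]
      simp [hk, Subtype.ext_iff, eq_comm]
    · rw [Fintype.sum_eq_zero _ fun l => by simp [show π k ≠ l from fun h => hk (h ▸ l.2)]]
      simp [hk]
  have hdM : diagonal d * M = M := by
    ext k l
    by_cases h : π k = l
    · simp [diagonal_mul, d, M, permMat, h, l.2]
    · simp [diagonal_mul, M, permMat, h]
  have hrank : M.rank = (diagonal d).rank := le_antisymm
    (calc M.rank = (diagonal d * M).rank := by rw [hdM]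
      _ ≤ _ := rank_mul_le_left _ _)
    (hMMt ▸ rank_mul_le_left _ _)
  rw [hrank, rank_diagonal, ← Nat.card_coe_set_eq, Nat.card_eq_fintype_card]
  exact Fintype.card_congr ((Equiv.subtypeEquivRight fun k => by simp [d]).trans
    (Equiv.subtypeSubtypeEquivSubtypeInter p fun k => q (π k)))

namespace IsBruhatPerm

open Matrix

variable {n : ℕ} {W : Matrix (Fin n) (Fin n) ℂ} {π : Equiv.Perm (Fin n)}

theorem rank_toBlock (hπ : IsBruhatPerm W π) {p q : Fin n → Prop} [DecidablePred q]
    (hp : Monotone p) (hq : Antitone q) :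
    (W.toBlock p q).rank = {i | p i ∧ q (π i)}.ncard := by
  obtain ⟨U₁, U₂, h₁, h₂, hd₁, hd₂, rfl⟩ := hπ
  have hU₁ : U₁.toBlock p (¬p ·) = 0 :=
    h₁.toBlock_eq_zero fun i j hi hj => lt_of_not_ge fun hij => hj (hp hij hi)
  have hU₂ : U₂.toBlock (¬q ·) q = 0 :=
    h₂.toBlock_eq_zero fun i j hi hj => lt_of_not_ge fun hij => hi (hq hij hj)
  rw [toBlock_mul_eq_add _ q, hU₂, Matrix.mul_zero, add_zero, toBlock_mul_eq_add _ p,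
    hU₁, Matrix.zero_mul, add_zero, rank_mul_eq_left_of_isUnit_det _ _ (h₂.isUnit_det_toBlock hd₂ q),
    rank_mul_eq_right_of_isUnit_det _ _ (h₁.isUnit_det_toBlock hd₁ p), rank_toBlock_permMat]

variable {m : Fin n}

theorem rank_toBlock_ge_le_eq_rank_toBlock_gt_le_add_one (hπ : IsBruhatPerm W π)
    (hm : π m = m) :
    (W.toBlock (m ≤ ·) (· ≤ m)).rank = (W.toBlock (m < ·) (· ≤ m)).rank + 1 := by
  rw [hπ.rank_toBlock (fun _ _ h h' => h'.trans h) (fun _ _ h h' => h.trans h'),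
    hπ.rank_toBlock (fun _ _ h h' => h'.trans_le h) (fun _ _ h h' => h.trans h')]
  have hrows : {i | m ≤ i ∧ π i ≤ m} = insert m {i | m < i ∧ π i ≤ m} := by
    ext i
    simp only [Set.mem_ofPred_eq, Set.mem_insert_iff]
    grind
  rw [hrows, Set.ncard_insert_of_notMem (by simp)]

theorem rank_toBlock_ge_le_eq_rank_toBlock_ge_lt_add_one (hπ : IsBruhatPerm W π)
    (hm : π m = m) :
    (W.toBlock (m ≤ ·) (· ≤ m)).rank = (W.toBlock (m ≤ ·) (· < m)).rank + 1 := by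
  rw [hπ.rank_toBlock (fun _ _ h h' => h'.trans h) (fun _ _ h h' => h.trans h'),
    hπ.rank_toBlock (fun _ _ h h' => h'.trans h) (fun _ _ h h' => h.trans_lt h')]
  have hcols : {i | m ≤ i ∧ π i ≤ m} = insert m {i | m ≤ i ∧ π i < m} := by
    ext i
    simp only [Set.mem_ofPred_eq, Set.mem_insert_iff]
    have := π.injective.eq_iff (a := i) (b := m)
    grind
  rw [hcols, Set.ncard_insert_of_notMem (by simp [hm])]

end IsBruhatPerm

lemma exists_equiv_fin_le_iff_of_injective {α β : Type*} [Fintype α] [LinearOrder β] {f : α → β}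
    (hf : Function.Injective f) :
    ∃ σ : α ≃ Fin (Fintype.card α), ∀ a b, σ a ≤ σ b ↔ f a ≤ f b := by
  let e := (Fintype.orderIsoFinOfCardEq (Set.range f) (Set.card_range_of_injective hf)).symm
  exact ⟨(Equiv.ofInjective f hf).trans e.toEquiv, fun a b => e.le_iff_le⟩

section Poset

variable {α : Type*} [PartialOrder α]

lemma exists_linExt_lt_of_isUpperSet [Fintype α] {U : Set α} (hU : IsUpperSet U) :
    ∃ σ : α ≃ Fin (Fintype.card α), IsLinExt σ ∧ ∀ a ∉ U, ∀ b ∈ U, σ a < σ b := by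
  let f : α → Bool ×ₗ LinearExtension α := fun a => toLex (decide (a ∈ U), toLinearExtension a)
  obtain ⟨σ, hσ⟩ := exists_equiv_fin_le_iff_of_injective (f := f) fun a b h =>
    congrArg (fun z => (ofLex z).2) h
  refine ⟨σ, fun a b hab => (hσ a b).mpr ?_, fun a ha b hb => lt_of_not_ge fun hba => ?_⟩
  · rw [Prod.Lex.toLex_le_toLex']
    by_cases ha : a ∈ U
    · simp [ha, hU hab ha, toLinearExtension.monotone hab]
    · by_cases hb : b ∈ U <;> simp [ha, hb, toLinearExtension.monotone hab]
  · simpa [f, ha, hb, Prod.Lex.toLex_le_toLex', Bool.le_iff_imp] using (hσ b a).mp hba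

variable {n : ℕ}

lemma isUnit_det_cartan {σ : α ≃ Fin n} (hσ : IsLinExt σ) : IsUnit (cartan σ).det := by
  rw [Matrix.det_of_isLowerTriangular (cartan σ) fun i j hij => if_neg fun hle => ?_]
  · simp [cartan]
  · simpa using (hσ _ _ hle).not_gt (by simpa using hij)

variable {σ : α ≃ Fin n} {π : Equiv.Perm (Fin n)} {x : α}

theorem isMin_of_isBruhatPerm_cartan (hπ : IsBruhatPerm (cartan σ) π) (hx : π (σ x) = σ x)
    (hsep : ∀ w, ¬x ≤ w → σ w < σ x) : IsMin x := by
  intro v hvx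
  by_contra hxv
  have hup : ∀ i, σ x ≤ i → x ≤ σ.symm i := fun i hi =>
    by_contra fun h => (hsep _ h).not_ge (by simpa using hi)
  have hcol := Matrix.rank_toBlock_eq_of_col_eq (M := cartan σ) (p := (σ x ≤ ·))
    (q := (· ≤ σ x)) (q' := (· < σ x)) (fun _ => le_iff_lt_or_eq) (hsep v hxv)
    fun i hi => by simp [cartan, hup i hi, hvx.trans (hup i hi)]
  have := hπ.rank_toBlock_ge_le_eq_rank_toBlock_ge_lt_add_one hx
  omega

theorem isMax_of_isBruhatPerm_cartan (hπ : IsBruhatPerm (cartan σ) π) (hx : π (σ x) = σ x)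
    (hsep : ∀ w, ¬w ≤ x → σ x < σ w) : IsMax x := by
  intro u hxu
  by_contra hux
  have hdown : ∀ j, j ≤ σ x → σ.symm j ≤ x := fun j hj =>
    by_contra fun h => (hsep _ h).not_ge (by simpa using hj)
  have hrow := Matrix.rank_toBlock_eq_of_row_eq (M := cartan σ) (p := (σ x ≤ ·))
    (p' := (σ x < ·)) (q := (· ≤ σ x)) (fun _ => by rw [le_iff_lt_or_eq, eq_comm]) (hsep u hux)
    fun j hj => by simp [cartan, hdown j hj, (hdown j hj).trans hxu]
  have := hπ.rank_toBlock_ge_le_eq_rank_toBlock_gt_le_add_one hx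
  omega

lemma PosetConnected.eq_of_isMin_of_isMax (hconn : PosetConnected α) (hmin : IsMin x)
    (hmax : IsMax x) (y : α) : y = x := by
  rcases (hconn x y).cases_head with h | ⟨c, hc | hc, -⟩
  · exact h.symm
  · exact absurd hc.lt hmax.not_lt
  · exact absurd hc.lt hmin.not_lt

lemma EchIndep.exists_isBruhatPerm_apply_eq_self [Fintype α] (hind : EchIndep α)
    {σ σ' : α ≃ Fin (Fintype.card α)} {π : Equiv.Perm (Fin (Fintype.card α))} (hσ : IsLinExt σ)
    (hπ : IsBruhatPerm (cartan σ) π) (hx : ech σ π x = x) (hσ' : IsLinExt σ') :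
    ∃ π', IsBruhatPerm (cartan σ') π' ∧ π' (σ' x) = σ' x := by
  obtain ⟨π', hπ'⟩ := exists_isBruhatPerm (isUnit_det_cartan hσ')
  refine ⟨π', hπ', ?_⟩
  have h : ech σ' π' x = x := by rw [hind σ' σ π' π hσ' hσ hπ' hπ, hx]
  rw [ech, Equiv.symm_apply_eq, Equiv.Perm.inv_eq_iff_eq] at h
  exact h.symm

end Poset

/-- Echelonmotion on an echelon-independent connected finite poset with at
least two elements has no fixed points. -/
theorem stmt13 {α : Type*} [PartialOrder α] [Fintype α]
    (hcard : 2 ≤ Fintype.card α)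
    (hconn : PosetConnected α) (hind : EchIndep α) :
    ∀ (σ : α ≃ Fin (Fintype.card α)) (π : Equiv.Perm (Fin (Fintype.card α))),
      IsLinExt σ → IsBruhatPerm (cartan σ) π → ∀ x : α, ech σ π x ≠ x := by
  intro σ π hσ hπ x hx
  obtain ⟨σ₁, hσ₁, hsep₁⟩ := exists_linExt_lt_of_isUpperSet (isUpperSet_Ici x)
  obtain ⟨σ₂, hσ₂, hsep₂⟩ := exists_linExt_lt_of_isUpperSet (isLowerSet_Iic x).compl
  obtain ⟨π₁, hπ₁, hx₁⟩ := hind.exists_isBruhatPerm_apply_eq_self hσ hπ hx hσ₁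
  obtain ⟨π₂, hπ₂, hx₂⟩ := hind.exists_isBruhatPerm_apply_eq_self hσ hπ hx hσ₂
  have hmin := isMin_of_isBruhatPerm_cartan hπ₁ hx₁ fun w hw => hsep₁ w hw x le_rfl
  have hmax := isMax_of_isBruhatPerm_cartan hπ₂ hx₂ fun w hw => hsep₂ x (by simp) w hw
  obtain ⟨y, hy⟩ := Fintype.exists_ne_of_one_lt_card hcard x
  exact hy (hconn.eq_of_isMin_of_isMax hmin hmax y)
end

section
/- Let σ be a linear extension of a finite poset R and let x, y ∈ R. Then Ech_σ(x) = y if and only if there exist functions ρ : Pre_σ(x) → ℂ and β : Suc_σ(y) → ℂ such that: (i) ρ(x) ≠ 0; (ii) β(y) ≠ 0; (iii) ∑_{w ∈ Pre_σ(x), w ≤ y} ρ(w) ≠ 0; (iv) ∑_{w ∈ Suc_σ(y), w ≥ x} β(w) ≠ 0; (v) for every u ∈ Suc_σ(y) with u ≠ y, ∑_{w ∈ Pre_σ(x), w ≤ u} ρ(w) = 0; (vi) for every v ∈ Pre_σ(x) with v ≠ x, ∑_{w ∈ Suc_σ(y), w ≥ v} β(w) = 0. -/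
open scoped Classical
open Finset

/-!
Read in the coordinates given by `σ`, the labelings `ρ` and `β` are a column vector `v`
supported on `[0, σ x]` and a row vector `b` supported on `[σ y, n)`, and the sums in the
statement are entries of `W *ᵥ v` and `b ᵥ* W` for `W = cartan σ`. Write `W = U₁ P U₂`
with `P` the permutation matrix of `π`. The vector `U₂ v` still has its last nonzero entry at
`σ x`, while its permutation `P U₂ v = U₁⁻¹ W v` vanishes beyond `σ y`; hence
`π⁻¹ (σ x) ≤ σ y`. Dually `b U₁` vanishes before `σ y` and `b U₁ P = b W U₂⁻¹` vanishes before
`σ x` but not at `σ x`, hence `σ y ≤ π⁻¹ (σ x)`. Conversely, if `π (σ y) = σ x`, column `σ x`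
of `U₂⁻¹` and row `σ y` of `U₁⁻¹` are such vectors: `W` maps them to column `σ y` of `U₁` and
row `σ x` of `U₂`, whose diagonal entries are nonzero.
-/

open scoped Matrix

namespace IsUpperTri

variable {n : ℕ} {U : Matrix (Fin n) (Fin n) ℂ}

theorem blockTriangular (hU : IsUpperTri U) : U.BlockTriangular id := fun i j hij => hU i j hij

theorem diag_ne_zero (hU : IsUpperTri U) (hd : IsUnit U.det) (i : Fin n) : U i i ≠ 0 := by
  rw [Matrix.det_of_isUpperTriangular hU.blockTriangular] at hd
  exact fun h => hd.ne_zero (Finset.prod_eq_zero (Finset.mem_univ i) h)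

theorem inv_s14 (hU : IsUpperTri U) : IsUpperTri U⁻¹ := by
  by_cases hd : IsUnit U.det
  · have := U.invertibleOfIsUnitDet hd
    exact fun i j hij => Matrix.blockTriangular_inv_of_blockTriangular hU.blockTriangular hij
  · simp [Matrix.nonsing_inv_apply_not_isUnit U hd, IsUpperTri]

theorem mulVec_apply_eq_zero (hU : IsUpperTri U) {v : Fin n → ℂ} {k : Fin n}
    (hv : ∀ j, k < j → v j = 0) {i : Fin n} (hi : k < i) : (U *ᵥ v) i = 0 := by
  rw [Matrix.mulVec, dotProduct]
  refine Finset.sum_eq_zero fun j _ => ?_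
  rcases lt_or_ge j i with hji | hij
  · rw [hU i j hji, zero_mul]
  · rw [hv j (hi.trans_le hij), mul_zero]

theorem mulVec_apply_self (hU : IsUpperTri U) {v : Fin n → ℂ} {k : Fin n}
    (hv : ∀ j, k < j → v j = 0) : (U *ᵥ v) k = U k k * v k := by
  rw [Matrix.mulVec, dotProduct]
  refine Finset.sum_eq_single k (fun j _ hjk => ?_) (by simp)
  rcases hjk.lt_or_gt with hjk | hkj
  · rw [hU k j hjk, zero_mul]
  · rw [hv j hkj, mul_zero]

theorem vecMul_apply_eq_zero (hU : IsUpperTri U) {b : Fin n → ℂ} {k : Fin n}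
    (hb : ∀ i, i < k → b i = 0) {j : Fin n} (hj : j < k) : (b ᵥ* U) j = 0 := by
  rw [Matrix.vecMul, dotProduct]
  refine Finset.sum_eq_zero fun i _ => ?_
  rcases lt_or_ge i k with hik | hki
  · rw [hb i hik, zero_mul]
  · rw [hU i j (hj.trans_le hki), mul_zero]

theorem vecMul_apply_self (hU : IsUpperTri U) {b : Fin n → ℂ} {k : Fin n}
    (hb : ∀ i, i < k → b i = 0) : (b ᵥ* U) k = b k * U k k := by
  rw [Matrix.vecMul, dotProduct]
  refine Finset.sum_eq_single k (fun i _ hik => ?_) (by simp)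
  rcases hik.lt_or_gt with hik | hki
  · rw [hb i hik, zero_mul]
  · rw [hU i k hki, mul_zero]

end IsUpperTri

theorem permMat_eq_permMatrix {n : ℕ} (π : Equiv.Perm (Fin n)) : permMat π = π.permMatrix ℂ := by
  ext i j
  simp [permMat, Equiv.Perm.permMatrix, PEquiv.toMatrix_apply]

namespace IsBruhatPerm

variable {n : ℕ} {U₁ U₂ : Matrix (Fin n) (Fin n) ℂ} {π : Equiv.Perm (Fin n)}

theorem mul_permMat_mul_mulVec (v : Fin n → ℂ) :
    (U₁ * permMat π * U₂) *ᵥ v = U₁ *ᵥ ((U₂ *ᵥ v) ∘ π) := by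
  rw [permMat_eq_permMatrix, ← Matrix.permMatrix_mulVec, Matrix.mulVec_mulVec,
    Matrix.mulVec_mulVec]

theorem vecMul_mul_permMat_mul (b : Fin n → ℂ) :
    b ᵥ* (U₁ * permMat π * U₂) = ((b ᵥ* U₁) ∘ π.symm) ᵥ* U₂ := by
  rw [permMat_eq_permMatrix, ← Matrix.vecMul_permMatrix, Matrix.vecMul_vecMul,
    Matrix.vecMul_vecMul, Matrix.mul_assoc]

variable {W : Matrix (Fin n) (Fin n) ℂ} {i₀ j₀ : Fin n}

theorem symm_apply_le (hπ : IsBruhatPerm W π) {v : Fin n → ℂ} (hv : ∀ j, j₀ < j → v j = 0)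
    (hv₀ : v j₀ ≠ 0) (hWv : ∀ i, i₀ < i → (W *ᵥ v) i = 0) : π.symm j₀ ≤ i₀ := by
  obtain ⟨U₁, U₂, h₁, h₂, d₁, d₂, rfl⟩ := hπ
  have hw : (U₂ *ᵥ v) ∘ π = U₁⁻¹ *ᵥ ((U₁ * permMat π * U₂) *ᵥ v) := by
    rw [mul_permMat_mul_mulVec, Matrix.mulVec_mulVec, Matrix.nonsing_inv_mul _ d₁,
      Matrix.one_mulVec]
  by_contra! h
  have := h₁.inv_s14.mulVec_apply_eq_zero hWv h
  rw [← hw, Function.comp_apply, Equiv.apply_symm_apply, h₂.mulVec_apply_self hv] at this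
  exact mul_ne_zero (h₂.diag_ne_zero d₂ j₀) hv₀ this

theorem le_symm_apply (hπ : IsBruhatPerm W π) {b : Fin n → ℂ} (hb : ∀ i, i < i₀ → b i = 0)
    (hbW₀ : (b ᵥ* W) j₀ ≠ 0) (hbW : ∀ j, j < j₀ → (b ᵥ* W) j = 0) : i₀ ≤ π.symm j₀ := by
  obtain ⟨U₁, U₂, h₁, h₂, -, d₂, rfl⟩ := hπ
  have hc : (b ᵥ* U₁) ∘ π.symm = b ᵥ* (U₁ * permMat π * U₂) ᵥ* U₂⁻¹ := by
    rw [vecMul_mul_permMat_mul, Matrix.vecMul_vecMul, Matrix.mul_nonsing_inv _ d₂,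
      Matrix.vecMul_one]
  have hc₀ : ∀ j, j < j₀ → ((b ᵥ* U₁) ∘ π.symm) j = 0 := by
    rw [hc]
    exact fun j hj => h₂.inv_s14.vecMul_apply_eq_zero hbW hj
  rw [vecMul_mul_permMat_mul, h₂.vecMul_apply_self hc₀, Function.comp_apply] at hbW₀
  by_contra! h
  exact hbW₀ (by rw [h₁.vecMul_apply_eq_zero hb h, zero_mul])

theorem exists_vectors_of_apply_eq (hπ : IsBruhatPerm W π) (h : π i₀ = j₀) :
    ∃ v b : Fin n → ℂ, (∀ j, j₀ < j → v j = 0) ∧ (∀ i, i < i₀ → b i = 0) ∧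
      v j₀ ≠ 0 ∧ b i₀ ≠ 0 ∧ (W *ᵥ v) i₀ ≠ 0 ∧ (b ᵥ* W) j₀ ≠ 0 ∧
      (∀ i, i₀ < i → (W *ᵥ v) i = 0) ∧ (∀ j, j < j₀ → (b ᵥ* W) j = 0) := by
  obtain ⟨U₁, U₂, h₁, h₂, d₁, d₂, rfl⟩ := hπ
  have hWv : (U₁ * permMat π * U₂) *ᵥ (U₂⁻¹ *ᵥ Pi.single j₀ 1) = U₁.col i₀ := by
    rw [mul_permMat_mul_mulVec, Matrix.mulVec_mulVec, Matrix.mul_nonsing_inv _ d₂,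
      Matrix.one_mulVec, ← h, Pi.single_comp_equiv, Equiv.symm_apply_apply,
      Matrix.mulVec_single_one]
  have hbW : Pi.single i₀ 1 ᵥ* U₁⁻¹ ᵥ* (U₁ * permMat π * U₂) = U₂.row j₀ := by
    rw [vecMul_mul_permMat_mul, Matrix.vecMul_vecMul, Matrix.nonsing_inv_mul _ d₁,
      Matrix.vecMul_one, ← h, Pi.single_comp_equiv, Equiv.symm_symm, Matrix.single_one_vecMul]
  simp only [Matrix.mulVec_single_one, Matrix.single_one_vecMul] at hWv hbW ⊢
  refine ⟨U₂⁻¹.col j₀, U₁⁻¹.row i₀, fun j hj => h₂.inv_s14 j j₀ hj, fun i hi => h₁.inv_s14 i₀ i hi,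
    h₂.inv_s14.diag_ne_zero (Matrix.isUnit_nonsing_inv_det _ d₂) j₀,
    h₁.inv_s14.diag_ne_zero (Matrix.isUnit_nonsing_inv_det _ d₁) i₀, ?_, ?_,
    fun i hi => ?_, fun j hj => ?_⟩ <;> simp only [hWv, hbW, Matrix.col_apply, Matrix.row_apply]
  · exact h₁.diag_ne_zero d₁ i₀
  · exact h₂.diag_ne_zero d₂ j₀
  · exact h₁ i i₀ hi
  · exact h₂ j₀ j hj

theorem apply_eq_iff (hπ : IsBruhatPerm W π) :
    π i₀ = j₀ ↔ ∃ v b : Fin n → ℂ, (∀ j, j₀ < j → v j = 0) ∧ (∀ i, i < i₀ → b i = 0) ∧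
      v j₀ ≠ 0 ∧ b i₀ ≠ 0 ∧ (W *ᵥ v) i₀ ≠ 0 ∧ (b ᵥ* W) j₀ ≠ 0 ∧
      (∀ i, i₀ < i → (W *ᵥ v) i = 0) ∧ (∀ j, j < j₀ → (b ᵥ* W) j = 0) := by
  refine ⟨hπ.exists_vectors_of_apply_eq, ?_⟩
  rintro ⟨v, b, hv, hb, hv₀, -, -, hbW₀, hWv, hbW⟩
  rw [← Equiv.eq_symm_apply]
  exact le_antisymm (hπ.le_symm_apply hb hbW₀ hbW) (hπ.symm_apply_le hv hv₀ hWv)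

end IsBruhatPerm

section Cartan

variable {α : Type*} [PartialOrder α] {n : ℕ} (σ : α ≃ Fin n)

theorem ech_eq_iff (π : Equiv.Perm (Fin n)) (x y : α) : ech σ π x = y ↔ π (σ y) = σ x := by
  rw [ech, Equiv.symm_apply_eq, Equiv.Perm.inv_def, Equiv.symm_apply_eq, eq_comm]

variable [Fintype α]

theorem cartan_mulVec_ite_apply (k : Fin n) (ρ : α → ℂ) (u : α) :
    (cartan σ *ᵥ fun j => if j ≤ k then ρ (σ.symm j) else 0) (σ u) =
      ∑ w ∈ Finset.univ.filter (fun w : α => σ w ≤ k ∧ w ≤ u), ρ w := by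
  simp only [cartan, Matrix.mulVec, dotProduct]
  rw [Finset.sum_filter, ← σ.sum_comp]
  simp [ite_and]

theorem ite_vecMul_cartan_apply (k : Fin n) (β : α → ℂ) (u : α) :
    ((fun i => if k ≤ i then β (σ.symm i) else 0) ᵥ* cartan σ) (σ u) =
      ∑ w ∈ Finset.univ.filter (fun w : α => k ≤ σ w ∧ u ≤ w), β w := by
  simp only [cartan, Matrix.vecMul, dotProduct]
  rw [Finset.sum_filter, ← σ.sum_comp]
  simp [← ite_and, and_comm]

theorem cartan_mulVec_apply {k : Fin n} {v : Fin n → ℂ} (hv : ∀ j, k < j → v j = 0) (u : α) :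
    (cartan σ *ᵥ v) (σ u) = ∑ w ∈ Finset.univ.filter (fun w : α => σ w ≤ k ∧ w ≤ u), v (σ w) := by
  convert cartan_mulVec_ite_apply σ k (v ∘ σ) u using 2
  · funext j
    split_ifs with h
    · simp
    · exact hv j (not_le.1 h)
  · rfl

theorem vecMul_cartan_apply {k : Fin n} {b : Fin n → ℂ} (hb : ∀ i, i < k → b i = 0) (u : α) :
    (b ᵥ* cartan σ) (σ u) = ∑ w ∈ Finset.univ.filter (fun w : α => k ≤ σ w ∧ u ≤ w), b (σ w) := by
  convert ite_vecMul_cartan_apply σ k (b ∘ σ) u using 2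
  · funext i
    split_ifs with h
    · simp
    · exact hb i (not_le.1 h)
  · rfl

end Cartan

theorem stmt14_general {α : Type*} [PartialOrder α] [Fintype α] {n : ℕ}
    (σ : α ≃ Fin n)
    (π : Equiv.Perm (Fin n)) (hπ : IsBruhatPerm (cartan σ) π)
    (x y : α) :
    ech σ π x = y ↔
      ∃ ρ β : α → ℂ,
        ρ x ≠ 0 ∧
        β y ≠ 0 ∧
        (∑ w ∈ Finset.univ.filter (fun w : α => σ w ≤ σ x ∧ w ≤ y), ρ w) ≠ 0 ∧
        (∑ w ∈ Finset.univ.filter (fun w : α => σ y ≤ σ w ∧ x ≤ w), β w) ≠ 0 ∧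
        (∀ u : α, σ y ≤ σ u → u ≠ y →
          ∑ w ∈ Finset.univ.filter (fun w : α => σ w ≤ σ x ∧ w ≤ u), ρ w = 0) ∧
        (∀ v : α, σ v ≤ σ x → v ≠ x →
          ∑ w ∈ Finset.univ.filter (fun w : α => σ y ≤ σ w ∧ v ≤ w), β w = 0) := by
  rw [ech_eq_iff, hπ.apply_eq_iff]
  constructor
  · rintro ⟨v, b, hv, hb, hv₀, hb₀, hWv₀, hbW₀, hWv, hbW⟩
    exact ⟨v ∘ σ, b ∘ σ, hv₀, hb₀, (cartan_mulVec_apply σ hv y).symm.trans_ne hWv₀,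
      (vecMul_cartan_apply σ hb x).symm.trans_ne hbW₀,
      fun u hu hne => (cartan_mulVec_apply σ hv u).symm.trans
        (hWv _ (hu.lt_of_ne (σ.injective.ne hne.symm))),
      fun u hu hne => (vecMul_cartan_apply σ hb u).symm.trans
        (hbW _ (hu.lt_of_ne (σ.injective.ne hne)))⟩
  · rintro ⟨ρ, β, hρ, hβ, hρy, hβx, hρ', hβ'⟩
    refine ⟨fun j => if j ≤ σ x then ρ (σ.symm j) else 0,
      fun i => if σ y ≤ i then β (σ.symm i) else 0, fun j hj => if_neg hj.not_ge,
      fun i hi => if_neg hi.not_ge, by simpa, by simpa, ?_, ?_,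
      σ.surjective.forall.2 fun u hu => ?_, σ.surjective.forall.2 fun u hu => ?_⟩
    · rwa [cartan_mulVec_ite_apply]
    · rwa [ite_vecMul_cartan_apply]
    · rw [cartan_mulVec_ite_apply]
      exact hρ' u hu.le fun h => hu.ne (congrArg σ h.symm)
    · rw [ite_vecMul_cartan_apply]
      exact hβ' u hu.le fun h => hu.ne (congrArg σ h)

/-- Characterization of echelonmotion in terms of labelings `ρ` of
`Pre_σ(x) = {w : σ w ≤ σ x}` and `β` of `Suc_σ(y) = {w : σ y ≤ σ w}`. -/
theorem stmt14 {α : Type*} [PartialOrder α] [Fintype α] {n : ℕ}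
    (σ : α ≃ Fin n) (hσ : IsLinExt σ)
    (π : Equiv.Perm (Fin n)) (hπ : IsBruhatPerm (cartan σ) π)
    (x y : α) :
    ech σ π x = y ↔
      ∃ ρ β : α → ℂ,
        ρ x ≠ 0 ∧
        β y ≠ 0 ∧
        (∑ w ∈ Finset.univ.filter (fun w : α => σ w ≤ σ x ∧ w ≤ y), ρ w) ≠ 0 ∧
        (∑ w ∈ Finset.univ.filter (fun w : α => σ y ≤ σ w ∧ x ≤ w), β w) ≠ 0 ∧
        (∀ u : α, σ y ≤ σ u → u ≠ y →
          ∑ w ∈ Finset.univ.filter (fun w : α => σ w ≤ σ x ∧ w ≤ u), ρ w = 0) ∧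
        (∀ v : α, σ v ≤ σ x → v ≠ x →
          ∑ w ∈ Finset.univ.filter (fun w : α => σ y ≤ σ w ∧ v ≤ w), β w = 0) :=
  stmt14_general σ π hπ x y
end

section
/- Let L be a finite lattice such that μ_L(pop↓(x), x) ≠ 0 for every x ∈ L, where pop↓(x) is the meet of x with all elements covered by x. Let σ be a linear extension of L. Define Υ(x) = {z ∈ L : z ∧ x = pop↓(x)} and α(x) = the element of Υ(x) with maximal σ-value. If α : L → L is a bijection, then Ech_σ(x) = α(x) for every x ∈ L. -/
open scoped Classical
open Finset

/-- `popDown x` is the meet of `x` with all elements covered by `x`. -/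
noncomputable def popDown {L : Type*} [Lattice L] [Fintype L] (x : L) : L :=
  (insert x (Finset.univ.filter fun y : L => y ⋖ x)).inf'
    (Finset.insert_nonempty _ _) id

/-!
The Bruhat permutation of a matrix is determined by the ranks of its southwest submatrices
(rows `≥ i`, columns `≤ j`), and these ranks are unchanged by multiplication on either side
with invertible upper-triangular matrices. Multiply the Cartan matrix on the right by the
upper-triangular matrix whose column `y` carries `μ (pop↓ y) ·` on `[pop↓ y, y]`: by Möbius
inversion its entry `(x, y)` becomes the indicator of `x ⊓ y = pop↓ y`, i.e. of `x ∈ Υ(y)`.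
In column `y` the last nonzero entry is then in row `α(y)`, exactly as for the permutation
matrix of the Bruhat decomposition, and equal southwest ranks force the two pivot patterns
to agree.
-/

lemma Finset.card_filter_le_and {α : Type*} [Fintype α] [LinearOrder α] (l : α) (q : α → Prop)
    [DecidablePred q] :
    #{l' | l' ≤ l ∧ q l'} = #{l' | l' < l ∧ q l'} + if q l then 1 else 0 := by
  split_ifs with hq
  · rw [← card_insert_of_notMem (a := l) (by simp)]
    congr 1
    ext l'
    simp only [mem_filter, mem_univ, true_and, mem_insert, le_iff_lt_or_eq]
    grind
  · congr 1
    ext l'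
    simp only [mem_filter, mem_univ, true_and, le_iff_lt_or_eq]
    grind

lemma eq_of_card_filter_le_eq {α β : Type*} [Fintype α] [LinearOrder α] [PartialOrder β]
    [DecidableLE β] {f g : α → β}
    (h : ∀ i j, #{l | l ≤ j ∧ i ≤ f l} = #{l | l ≤ j ∧ i ≤ g l}) : f = g := by
  funext l
  induction l using WellFoundedLT.induction with
  | _ l ih =>
    have hbelow : ∀ i, #{l' | l' < l ∧ i ≤ f l'} = #{l' | l' < l ∧ i ≤ g l'} := fun i =>
      congrArg card <| filter_congr fun l' _ => and_congr_right fun hl' => by rw [ih l' hl']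
    have hiff : ∀ i, i ≤ f l ↔ i ≤ g l := by
      intro i
      have := h i l
      rw [card_filter_le_and, card_filter_le_and, hbelow] at this
      split_ifs at this <;> simp_all
    exact le_antisymm ((hiff _).1 le_rfl) ((hiff _).2 le_rfl)

namespace Matrix

variable {K : Type*} [Field K] {m : Type*} [Fintype m] [LinearOrder m]

lemma det_ne_zero_of_blockTriangular_of_injective {ι α : Type*} [Fintype ι] [DecidableEq ι]
    [LinearOrder α] {M : Matrix ι ι K} {b : ι → α} (hM : M.BlockTriangular b)
    (hb : Function.Injective b) (hdiag : ∀ i, M i i ≠ 0) : M.det ≠ 0 := by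
  let _ : LinearOrder ι := LinearOrder.lift' b hb
  have hM' : M.IsUpperTriangular := fun _ _ h => hM h
  -- `convert` reconciles `DecidableEq ι` with the one carried by the lifted order
  convert prod_ne_zero_iff.2 fun i _ => hdiag i
  convert det_of_isUpperTriangular hM'

lemma rank_eq_card_of_blockTriangular {X Y : Type*} [Fintype X] [Fintype Y] [LinearOrder X]
    (M : Matrix X Y K) (S : Finset Y) (g : S → X) (hg : Function.Injective g)
    (hzero : ∀ y ∉ S, ∀ x, M x y = 0)
    (htri : (M.submatrix g Subtype.val).BlockTriangular g) (hdiag : ∀ s : S, M (g s) s ≠ 0) :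
    M.rank = #S := by
  apply le_antisymm
  · have hcols : Set.range M.col ⊆ insert 0 (S.image M.col : Set (X → K)) := by
      rintro _ ⟨y, rfl⟩
      by_cases hy : y ∈ S
      · exact Set.mem_insert_of_mem _ (by simpa using ⟨y, hy, rfl⟩)
      · exact Set.mem_insert_iff.2 (Or.inl (funext fun x => hzero y hy x))
    rw [rank_eq_finrank_span_cols]
    calc Module.finrank K (Submodule.span K (Set.range M.col))
        ≤ Module.finrank K (Submodule.span K (S.image M.col : Set (X → K))) := by
          apply Submodule.finrank_mono
          exact (Submodule.span_mono hcols).trans_eq Submodule.span_insert_zero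
      _ ≤ #(S.image M.col) := finrank_span_finset_le_card _
      _ ≤ #S := card_image_le
  · calc #S = Fintype.card S := (Fintype.card_coe S).symm
      _ = (M.submatrix g Subtype.val).rank :=
          (rank_of_det_ne_zero (det_ne_zero_of_blockTriangular_of_injective htri hg hdiag)).symm
      _ ≤ M.rank := rank_submatrix_le _ _ _

noncomputable def southwestRank (M : Matrix m m K) (i j : m) : ℕ :=
  (M.submatrix (Subtype.val : {k // i ≤ k} → m) (Subtype.val : {l // l ≤ j} → m)).rank

lemma IsUpperTriangular.det_submatrix_ne_zero {U : Matrix m m K} (hU : U.IsUpperTriangular)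
    (hd : U.det ≠ 0) (p : m → Prop) [DecidablePred p] :
    (U.submatrix (Subtype.val : Subtype p → m) Subtype.val).det ≠ 0 := by
  have hUp : (U.submatrix (Subtype.val : Subtype p → m) Subtype.val).IsUpperTriangular :=
    fun _ _ h => hU h
  rw [det_of_isUpperTriangular hU, prod_ne_zero_iff] at hd
  rw [det_of_isUpperTriangular hUp, prod_ne_zero_iff]
  exact fun k _ => hd k (mem_univ _)

lemma southwestRank_upperTriangular_mul {U : Matrix m m K} (hU : U.IsUpperTriangular)
    (hd : U.det ≠ 0) (M : Matrix m m K) (i j : m) :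
    (U * M).southwestRank i j = M.southwestRank i j := by
  have hfactor :
      (U * M).submatrix (Subtype.val : {k // i ≤ k} → m) (Subtype.val : {l // l ≤ j} → m)
        = U.submatrix (Subtype.val : {k // i ≤ k} → m) (Subtype.val : {k // i ≤ k} → m)
          * M.submatrix (Subtype.val : {k // i ≤ k} → m) (Subtype.val : {l // l ≤ j} → m) := by
    ext a b
    refine sum_congr_set {k | i ≤ k} _ _ (fun _ _ => rfl) fun k hk => ?_
    exact mul_eq_zero_of_left (hU (lt_of_lt_of_le (not_le.1 hk) a.2)) _
  rw [southwestRank, southwestRank, hfactor]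
  exact rank_mul_eq_right_of_det_ne_zero _ _ (hU.det_submatrix_ne_zero hd (i ≤ ·))

lemma southwestRank_mul_upperTriangular {U : Matrix m m K} (hU : U.IsUpperTriangular)
    (hd : U.det ≠ 0) (M : Matrix m m K) (i j : m) :
    (M * U).southwestRank i j = M.southwestRank i j := by
  have hfactor :
      (M * U).submatrix (Subtype.val : {k // i ≤ k} → m) (Subtype.val : {l // l ≤ j} → m)
        = M.submatrix (Subtype.val : {k // i ≤ k} → m) (Subtype.val : {l // l ≤ j} → m)
          * U.submatrix (Subtype.val : {l // l ≤ j} → m) (Subtype.val : {l // l ≤ j} → m) := by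
    ext a b
    refine sum_congr_set {k | k ≤ j} _ _ (fun _ _ => rfl) fun k hk => ?_
    exact mul_eq_zero_of_right _ (hU (lt_of_le_of_lt b.2 (not_le.1 hk)))
  rw [southwestRank, southwestRank, hfactor]
  exact rank_mul_eq_left_of_det_ne_zero _ _ (hU.det_submatrix_ne_zero hd (· ≤ j))

def IsLastNonzeroRow (M : Matrix m m K) (f : m → m) : Prop :=
  ∀ l, M (f l) l ≠ 0 ∧ ∀ k, M k l ≠ 0 → k ≤ f l

lemma IsLastNonzeroRow.southwestRank_eq {M : Matrix m m K} {f : m → m}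
    (hM : M.IsLastNonzeroRow f) (hf : Function.Injective f) (i j : m) :
    M.southwestRank i j = #{l | l ≤ j ∧ i ≤ f l} := by
  set S := ({l | l ≤ j ∧ i ≤ f l} : Finset m).subtype (· ≤ j)
  have hS : ∀ y : {l // l ≤ j}, y ∈ S ↔ i ≤ f y := fun y => by simp [S, y.2]
  have hcard : #S = #{l | l ≤ j ∧ i ≤ f l} := by
    rw [card_subtype, filter_true_of_mem fun l hl => (mem_filter.1 hl).2.1]
  rw [← hcard]
  refine rank_eq_card_of_blockTriangular _ S (fun s => ⟨f s, (hS s).1 s.2⟩) ?_ ?_ ?_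
    fun s => (hM s).1
  · intro s t hst
    exact Subtype.ext (Subtype.ext (hf (congrArg Subtype.val hst)))
  · intro y hy x
    by_contra hxy
    exact hy ((hS y).2 (x.2.trans ((hM y).2 x hxy)))
  · intro s t hts
    by_contra hst
    exact not_le.2 hts ((hM t).2 _ hst)

lemma eq_of_southwestRank_eq {M N : Matrix m m K} {f g : m → m}
    (hM : M.IsLastNonzeroRow f) (hf : Function.Injective f)
    (hN : N.IsLastNonzeroRow g) (hg : Function.Injective g)
    (h : ∀ i j, M.southwestRank i j = N.southwestRank i j) : f = g :=
  eq_of_card_filter_le_eq fun i j => by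
    rw [← hM.southwestRank_eq hf, ← hN.southwestRank_eq hg, h]

end Matrix

open Matrix

lemma permMat_isLastNonzeroRow {n : ℕ} (π : Equiv.Perm (Fin n)) :
    (permMat π).IsLastNonzeroRow ⇑π⁻¹ := by
  refine fun l => ⟨by simp [permMat], fun k hk => le_of_eq ?_⟩
  rw [permMat, ne_eq, ite_eq_right_iff, not_forall] at hk
  obtain ⟨rfl, -⟩ := hk
  simp

lemma popDown_le {L : Type*} [Lattice L] [Fintype L] (x : L) : popDown x ≤ x :=
  inf'_le id (mem_insert_self _ _)

section Moebius

variable {L : Type*} [Lattice L] [Fintype L] {n : ℕ} (σ : L ≃ Fin n) {μ : L → L → ℂ}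

def IsMoebiusFunction (μ : L → L → ℂ) : Prop :=
  ∀ a b : L, a ≤ b → ∑ z ∈ Finset.univ.filter (fun z : L => a ≤ z ∧ z ≤ b), μ a z
    = if a = b then 1 else 0

lemma IsMoebiusFunction.sum_eq_ite (hμ : IsMoebiusFunction μ) (a b : L) :
    ∑ z ∈ Finset.univ.filter (fun z : L => a ≤ z ∧ z ≤ b), μ a z = if a = b then 1 else 0 := by
  by_cases hab : a ≤ b
  · exact hμ a b hab
  · rw [filter_false_of_mem fun z _ hz => hab (hz.1.trans hz.2), sum_empty,
      if_neg fun h => hab h.le]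

noncomputable def popMoebiusMatrix (μ : L → L → ℂ) : Matrix (Fin n) (Fin n) ℂ := fun k l =>
  if popDown (σ.symm l) ≤ σ.symm k ∧ σ.symm k ≤ σ.symm l then μ (popDown (σ.symm l)) (σ.symm k)
  else 0

variable {σ}

lemma popMoebiusMatrix_isUpperTriangular (hσ : IsLinExt σ) (μ : L → L → ℂ) :
    (popMoebiusMatrix σ μ).IsUpperTriangular := by
  intro k l hlk
  refine if_neg fun h => not_le.2 hlk ?_
  simpa using hσ _ _ h.2

lemma popMoebiusMatrix_det_ne_zero (hσ : IsLinExt σ) (hpop : ∀ x : L, μ (popDown x) x ≠ 0) :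
    (popMoebiusMatrix σ μ).det ≠ 0 := by
  rw [det_of_isUpperTriangular (popMoebiusMatrix_isUpperTriangular hσ μ), prod_ne_zero_iff]
  intro k _
  rw [popMoebiusMatrix, if_pos ⟨popDown_le _, le_rfl⟩]
  exact hpop _

lemma cartan_mul_popMoebiusMatrix (hμ : IsMoebiusFunction μ) (k l : Fin n) :
    (cartan σ * popMoebiusMatrix σ μ) k l =
      if σ.symm k ⊓ σ.symm l = popDown (σ.symm l) then 1 else 0 := by
  rw [mul_apply, ← Equiv.sum_comp σ]
  simp only [cartan, popMoebiusMatrix, Equiv.symm_apply_apply, ite_mul, one_mul, zero_mul,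
    ← ite_and]
  have hinterval : ∀ a : L, a ≤ σ.symm k ∧ popDown (σ.symm l) ≤ a ∧ a ≤ σ.symm l ↔
      popDown (σ.symm l) ≤ a ∧ a ≤ σ.symm k ⊓ σ.symm l := fun a => by rw [le_inf_iff]; tauto
  rw [← sum_filter, filter_congr fun a _ => hinterval a, hμ.sum_eq_ite]
  exact if_congr eq_comm rfl rfl

lemma cartan_mul_popMoebiusMatrix_isLastNonzeroRow (hμ : IsMoebiusFunction μ) {A : L → L}
    (hA1 : ∀ x : L, A x ⊓ x = popDown x) (hA2 : ∀ x z : L, z ⊓ x = popDown x → σ z ≤ σ (A x)) :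
    (cartan σ * popMoebiusMatrix σ μ).IsLastNonzeroRow (σ ∘ A ∘ σ.symm) := by
  intro l
  simp only [cartan_mul_popMoebiusMatrix hμ, Function.comp_apply, Equiv.symm_apply_apply,
    hA1, if_true, ne_eq, one_ne_zero, not_false_eq_true, true_and, ite_eq_right_iff, not_forall]
  rintro k ⟨hk, -⟩
  simpa using hA2 _ _ hk

end Moebius

theorem stmt16_general {L : Type*} [Lattice L] [Fintype L] {n : ℕ}
    (σ : L ≃ Fin n) (hσ : IsLinExt σ)
    (μ : L → L → ℂ)
    (hμ : ∀ a b : L, a ≤ b →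
      ∑ z ∈ Finset.univ.filter (fun z : L => a ≤ z ∧ z ≤ b), μ a z
        = if a = b then 1 else 0)
    (hpop : ∀ x : L, μ (popDown x) x ≠ 0)
    (A : L → L)
    (hA1 : ∀ x : L, A x ⊓ x = popDown x)
    (hA2 : ∀ x z : L, z ⊓ x = popDown x → σ z ≤ σ (A x))
    (hAbij : Function.Bijective A)
    (π : Equiv.Perm (Fin n)) (hπ : IsBruhatPerm (cartan σ) π) :
    ∀ x : L, ech σ π x = A x := by
  obtain ⟨U₁, U₂, hU₁, hU₂, hd₁, hd₂, hW⟩ := hπ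
  have hrank : ∀ i j, (permMat π).southwestRank i j
      = (cartan σ * popMoebiusMatrix σ μ).southwestRank i j := fun i j => by
    rw [southwestRank_mul_upperTriangular (popMoebiusMatrix_isUpperTriangular hσ μ)
        (popMoebiusMatrix_det_ne_zero hσ hpop), hW,
      southwestRank_mul_upperTriangular (U := U₂) (fun _ _ h => hU₂ _ _ h) hd₂.ne_zero,
      southwestRank_upperTriangular_mul (U := U₁) (fun _ _ h => hU₁ _ _ h) hd₁.ne_zero]
  have hech : ⇑π⁻¹ = σ ∘ A ∘ σ.symm :=
    eq_of_southwestRank_eq (permMat_isLastNonzeroRow π) π⁻¹.injective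
      (cartan_mul_popMoebiusMatrix_isLastNonzeroRow hμ hA1 hA2)
      (σ.injective.comp (hAbij.1.comp σ.symm.injective)) hrank
  intro x
  simp [ech, hech]

/-- Let `L` be a finite lattice with `μ (popDown x) x ≠ 0` for all `x`, and let
`A x` be the element of `Υ(x) = {z : z ⊓ x = popDown x}` with maximal σ-value.
If `A` is a bijection, then echelonmotion coincides with `A`. -/
theorem stmt16 {L : Type*} [Lattice L] [Fintype L] {n : ℕ}
    (σ : L ≃ Fin n) (hσ : IsLinExt σ)
    (μ : L → L → ℂ)
    (hμ0 : ∀ a b : L, ¬ a ≤ b → μ a b = 0)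
    (hμ : ∀ a b : L, a ≤ b →
      ∑ z ∈ Finset.univ.filter (fun z : L => a ≤ z ∧ z ≤ b), μ a z
        = if a = b then 1 else 0)
    (hpop : ∀ x : L, μ (popDown x) x ≠ 0)
    (A : L → L)
    (hA1 : ∀ x : L, A x ⊓ x = popDown x)
    (hA2 : ∀ x z : L, z ⊓ x = popDown x → σ z ≤ σ (A x))
    (hAbij : Function.Bijective A)
    (π : Equiv.Perm (Fin n)) (hπ : IsBruhatPerm (cartan σ) π) :
    ∀ x : L, ech σ π x = A x :=
  stmt16_general σ hσ μ hμ hpop A hA1 hA2 hAbij π hπ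
end
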